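/- arXiv:1304.6343 — 3 statements merged into one kernel-verified Lean document; each statement's English description precedes it below -/
import Mathlib

section
/- In a commutative Q-algebra, suppose elements x_0,...,x_4 (indices mod 5) satisfy x_i · x_{i+1} = 0 and (x_i + x_{i+2} - x_{i+1}) · x_k = 0 for all k ∈ {i, i-1, i+2, i+3}. Then also (x_i + x_{i+2} - x_{i+1})(x_{i-3} + x_{i-1} - x_{i-2}) = 0 for all i, i.e., the 'diagonal-diagonal' relations are consequences of the 'side-side' and 'side-diagonal' relations. -/
/- Modulo 5 the second factor is `x (i + 2) + x (i - 1) - x (i + 3)`, so the product expands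
into three of the side-diagonal relations `h2`. -/
theorem stmt1_general (A : Type*) [CommRing A] (x : ZMod 5 → A)
    (h2 : ∀ i k : ZMod 5, (k = i ∨ k = i - 1 ∨ k = i + 2 ∨ k = i + 3) →
      (x i + x (i + 2) - x (i + 1)) * x k = 0) :
    ∀ i : ZMod 5,
      (x i + x (i + 2) - x (i + 1)) * (x (i - 3) + x (i - 1) - x (i - 2)) = 0 := by
  intro i
  have hsub3 : i - 3 = i + 2 := by rw [show (3 : ZMod 5) = -2 by decide]; ring
  have hsub2 : i - 2 = i + 3 := by rw [show (2 : ZMod 5) = -3 by decide]; ring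
  rw [hsub3, hsub2]
  linear_combination h2 i (i + 2) (by simp) + h2 i (i - 1) (by simp) - h2 i (i + 3) (by simp)

/-- In a commutative ℚ-algebra, if `x_i x_{i+1} = 0` and
`(x_i + x_{i+2} - x_{i+1}) x_k = 0` for `k ∈ {i, i-1, i+2, i+3}` (indices mod 5), then
`(x_i + x_{i+2} - x_{i+1})(x_{i-3} + x_{i-1} - x_{i-2}) = 0` for all `i`. -/
theorem stmt1 (A : Type*) [CommRing A] [Algebra ℚ A] (x : ZMod 5 → A)
    (h1 : ∀ i : ZMod 5, x i * x (i + 1) = 0)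
    (h2 : ∀ i k : ZMod 5, (k = i ∨ k = i - 1 ∨ k = i + 2 ∨ k = i + 3) →
      (x i + x (i + 2) - x (i + 1)) * x k = 0) :
    ∀ i : ZMod 5,
      (x i + x (i + 2) - x (i + 1)) * (x (i - 3) + x (i - 1) - x (i - 2)) = 0 :=
  stmt1_general A x h2
end

section
/- Let A be the graded commutative Q-algebra generated in degree 1 by x_0,...,x_4 (indices mod 5) subject to the quadratic relations x_i x_{i+1} = 0 and (x_i + x_{i+2} - x_{i+1}) x_k = 0 for k ∈ {i, i-1, i+2, i+3}. Then the degree-2 component A_2 is one-dimensional over Q, spanned by x_0^2. -/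
open MvPolynomial

/-- The quadratic Keel relations for `M̄_{0,5}` in the side variables `x_i`, `i ∈ ℤ/5ℤ`. -/
noncomputable def keelRels5 : Set (MvPolynomial (ZMod 5) ℚ) :=
  {p | ∃ i : ZMod 5, p = X i * X (i + 1)} ∪
  {p | ∃ i k : ZMod 5, (k = i ∨ k = i - 1 ∨ k = i + 2 ∨ k = i + 3) ∧
      p = (X i + X (i + 2) - X (i + 1)) * X k}

noncomputable def keelIdeal5 : Ideal (MvPolynomial (ZMod 5) ℚ) := Ideal.span keelRels5

/-- The degree-`n` graded component of `A = ℚ[x_0,…,x_4]/I`. -/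
noncomputable def keelComp5 (n : ℕ) :
    Submodule ℚ (MvPolynomial (ZMod 5) ℚ ⧸ keelIdeal5) :=
  (MvPolynomial.homogeneousSubmodule (ZMod 5) ℚ n).map
    (Ideal.Quotient.mkₐ ℚ keelIdeal5).toLinearMap

/-!
The relations give `x_i x_{i+1} = 0`, `x_i x_{i+2} = -x_i²` and `x_{i+2}² = x_i²`; as `2` generates
`ℤ/5`, every product `x_a x_b` is the multiple `keelForm a b` of `x_0²`, so `A_2` is spanned by `x_0²`.
The form `keelForm` itself satisfies the relations, so the second-order functional
`p ↦ ∑ keelForm c d · ∂_c ∂_d p (0)` kills every relation. Since the relations are homogeneous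
quadratics, `x_0² ∈ I` would put `x_0²` in their `ℚ`-span, where that functional vanishes; but it
takes the value `2` on `x_0²`.
-/

namespace MvPolynomial

variable {σ R : Type*} [CommSemiring R]

theorem homogeneousComponent_mul_of_isHomogeneous {n : ℕ} {r : MvPolynomial σ R}
    (hr : r.IsHomogeneous n) (q : MvPolynomial σ R) :
    homogeneousComponent n (q * r) = C (coeff 0 q) * r := by
  conv_lhs => rw [← sum_homogeneousComponent q, Finset.sum_mul, map_sum]
  rw [Finset.sum_eq_single 0]
  · rw [homogeneousComponent_of_mem ((homogeneousComponent_isHomogeneous 0 q).mul hr),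
      zero_add, if_pos rfl, homogeneousComponent_zero]
  · intro k _ hk
    rw [homogeneousComponent_of_mem ((homogeneousComponent_isHomogeneous k q).mul hr),
      if_neg (by omega)]
  · simp

theorem homogeneousComponent_mem_span_of_mem_ideal_span {n : ℕ} {S : Set (MvPolynomial σ R)}
    (hS : ∀ r ∈ S, r.IsHomogeneous n) {p : MvPolynomial σ R} (hp : p ∈ Ideal.span S) :
    homogeneousComponent n p ∈ Submodule.span R S := by
  suffices ∀ q, homogeneousComponent n (q * p) ∈ Submodule.span R S by simpa using this 1
  induction hp using Submodule.span_induction with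
  | mem r hr =>
    intro q
    rw [homogeneousComponent_mul_of_isHomogeneous (hS r hr), ← smul_eq_C_mul]
    exact Submodule.smul_mem _ _ (Submodule.subset_span hr)
  | zero => simp
  | add x y _ _ hx hy => intro q; rw [mul_add, map_add]; exact add_mem (hx q) (hy q)
  | smul a x _ hx => intro q; rw [smul_eq_mul, ← mul_assoc]; exact hx (q * a)

theorem _root_.Finsupp.exists_eq_single_add_single_of_degree_eq_two {d : σ →₀ ℕ}
    (hd : d.degree = 2) : ∃ a b, d = Finsupp.single a 1 + Finsupp.single b 1 := by
  classical
  have hcard : Multiset.card (Finsupp.toMultiset d) = 2 := by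
    rw [Finsupp.card_toMultiset, ← hd, Finsupp.degree]; rfl
  obtain ⟨a, b, hab⟩ := Multiset.card_eq_two.mp hcard
  refine ⟨a, b, Multiset.toFinsupp.symm.injective ?_⟩
  simp [hab, Multiset.insert_eq_cons]

theorem homogeneousSubmodule_two_eq_span :
    homogeneousSubmodule σ R 2 = Submodule.span R (Set.range fun ab : σ × σ ↦ X ab.1 * X ab.2) := by
  apply le_antisymm
  · rw [homogeneousSubmodule_eq_finsupp_supported, AddMonoidAlgebra.supported_eq_span_single,
      Submodule.span_le]
    rintro _ ⟨d, hd, rfl⟩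
    obtain ⟨a, b, rfl⟩ := Finsupp.exists_eq_single_add_single_of_degree_eq_two hd
    refine Submodule.subset_span ⟨(a, b), ?_⟩
    dsimp only
    rw [single_eq_monomial, ← mul_one (1 : R), ← monomial_mul]
    rfl
  · rw [Submodule.span_le]
    rintro _ ⟨ab, rfl⟩
    exact (isHomogeneous_X R ab.1).mul (isHomogeneous_X R ab.2)

noncomputable def hessianPairing [Fintype σ] (M : σ → σ → R) : MvPolynomial σ R →ₗ[R] R :=
  ∑ c, ∑ d, M c d • ((aeval 0).toLinearMap ∘ₗ (pderiv c).toLinearMap ∘ₗ (pderiv d).toLinearMap)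

theorem hessianPairing_X_mul_X [Fintype σ] [DecidableEq σ] (M : σ → σ → R) (a b : σ) :
    hessianPairing M (X a * X b) = M a b + M b a := by
  simp [hessianPairing, Derivation.leibniz, pderiv_X, Pi.single_apply, apply_ite (pderiv _),
    apply_ite constantCoeff, mul_add, mul_ite, Finset.sum_add_distrib]

end MvPolynomial

def keelForm (a b : ZMod 5) : ℤ :=
  if b - a = 0 then 1 else if b - a = 2 ∨ b - a = 3 then -1 else 0

theorem keelForm_comm : ∀ a b, keelForm a b = keelForm b a := by decide

theorem keelForm_add_one : ∀ i, keelForm i (i + 1) = 0 := by decide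

theorem keelForm_relation : ∀ i k : ZMod 5, (k = i ∨ k = i - 1 ∨ k = i + 2 ∨ k = i + 3) →
    keelForm i k + keelForm (i + 2) k - keelForm (i + 1) k = 0 := by decide

noncomputable abbrev keelX (i : ZMod 5) : MvPolynomial (ZMod 5) ℚ ⧸ keelIdeal5 :=
  Ideal.Quotient.mk keelIdeal5 (X i)

theorem keelX_mul_keelX_add_one (i : ZMod 5) : keelX i * keelX (i + 1) = 0 := by
  rw [← map_mul, Ideal.Quotient.eq_zero_iff_mem]
  exact Ideal.subset_span (Or.inl ⟨i, rfl⟩)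

theorem keelX_relation (i k : ZMod 5) (hk : k = i ∨ k = i - 1 ∨ k = i + 2 ∨ k = i + 3) :
    (keelX i + keelX (i + 2) - keelX (i + 1)) * keelX k = 0 := by
  simp only [← map_add, ← map_sub, ← map_mul, Ideal.Quotient.eq_zero_iff_mem]
  exact Ideal.subset_span (Or.inr ⟨i, k, hk, rfl⟩)

theorem keelX_mul_keelX_add_two (i : ZMod 5) : keelX i * keelX (i + 2) = -keelX i ^ 2 := by
  linear_combination keelX_relation i i (Or.inl rfl) + keelX_mul_keelX_add_one i

theorem keelX_add_two_sq (i : ZMod 5) : keelX (i + 2) ^ 2 = keelX i ^ 2 := by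
  have h := keelX_mul_keelX_add_one (i + 1)
  rw [add_assoc, one_add_one_eq_two] at h
  linear_combination keelX_relation i (i + 2) (by simp) - keelX_relation i i (Or.inl rfl) + h -
    keelX_mul_keelX_add_one i

theorem keelX_sq (i : ZMod 5) : keelX i ^ 2 = keelX 0 ^ 2 := by
  have h (j : ZMod 5) : keelX (j + 2) ^ 2 = keelX j ^ 2 := keelX_add_two_sq j
  obtain rfl | rfl | rfl | rfl | rfl : i = 0 ∨ i = 1 ∨ i = 2 ∨ i = 3 ∨ i = 4 := by revert i; decide
  exacts [rfl, (h 4).trans <| (h 2).trans (h 0), h 0,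
    (h 1).trans <| (h 4).trans <| (h 2).trans (h 0), (h 2).trans (h 0)]

theorem keelX_mul_keelX (a b : ZMod 5) : keelX a * keelX b = keelForm a b • keelX 0 ^ 2 := by
  obtain ⟨d, rfl⟩ : ∃ d, b = a + d := ⟨b - a, by ring⟩
  rw [show keelForm a (a + d) = keelForm 0 d by simp [keelForm]]
  obtain rfl | rfl | rfl | rfl | rfl : d = 0 ∨ d = 1 ∨ d = 2 ∨ d = 3 ∨ d = 4 := by revert d; decide
  · rw [add_zero, ← sq, keelX_sq]
    exact (one_smul ℤ _).symm
  · rw [keelX_mul_keelX_add_one]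
    exact (zero_smul ℤ _).symm
  · rw [keelX_mul_keelX_add_two, keelX_sq]
    exact (neg_one_zsmul _).symm
  · have h := keelX_mul_keelX_add_two (a + 3)
    rw [add_assoc, show (3 + 2 : ZMod 5) = 0 from rfl, add_zero, keelX_sq, mul_comm] at h
    rw [h]
    exact (neg_one_zsmul _).symm
  · have h := keelX_mul_keelX_add_one (a + 4)
    rw [add_assoc, show (4 + 1 : ZMod 5) = 0 from rfl, add_zero, mul_comm] at h
    rw [h]
    exact (zero_smul ℤ _).symm

theorem keelComp5_two_le_span :
    keelComp5 2 ≤ Submodule.span ℚ {Ideal.Quotient.mk keelIdeal5 (X 0 ^ 2)} := by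
  rw [keelComp5, homogeneousSubmodule_two_eq_span, Submodule.map_span, Submodule.span_le]
  rintro _ ⟨_, ⟨ab, rfl⟩, rfl⟩
  rw [SetLike.mem_coe, AlgHom.toLinearMap_apply, Ideal.Quotient.mkₐ_eq_mk, map_mul, map_pow,
    keelX_mul_keelX]
  exact zsmul_mem (Submodule.mem_span_singleton_self _) _

noncomputable def keelPairing : MvPolynomial (ZMod 5) ℚ →ₗ[ℚ] ℚ :=
  hessianPairing fun a b ↦ (keelForm a b : ℚ)

theorem keelPairing_X_mul_X (a b : ZMod 5) : keelPairing (X a * X b) = 2 * keelForm a b := by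
  rw [keelPairing, hessianPairing_X_mul_X, keelForm_comm b a]
  ring

theorem keelPairing_eq_zero_of_mem_keelRels5 {r : MvPolynomial (ZMod 5) ℚ} (hr : r ∈ keelRels5) :
    keelPairing r = 0 := by
  rcases hr with ⟨i, rfl⟩ | ⟨i, k, hk, rfl⟩
  · simp [keelPairing_X_mul_X, keelForm_add_one]
  · have h : ((keelForm i k + keelForm (i + 2) k - keelForm (i + 1) k : ℤ) : ℚ) = 0 := by
      rw [keelForm_relation i k hk, Int.cast_zero]
    simp only [add_mul, sub_mul, map_add, map_sub, keelPairing_X_mul_X]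
    push_cast at h
    linear_combination 2 * h

theorem keelRels5_isHomogeneous : ∀ r ∈ keelRels5, r.IsHomogeneous 2 := by
  have hX (i : ZMod 5) : (X i : MvPolynomial (ZMod 5) ℚ).IsHomogeneous 1 := isHomogeneous_X ℚ i
  rintro _ (⟨i, rfl⟩ | ⟨i, k, -, rfl⟩)
  · exact (hX i).mul (hX (i + 1))
  · exact (((hX i).add (hX (i + 2))).sub (hX (i + 1))).mul (hX k)

theorem X_zero_sq_notMem_keelIdeal5 : (X 0 ^ 2 : MvPolynomial (ZMod 5) ℚ) ∉ keelIdeal5 := by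
  intro h
  have hspan := homogeneousComponent_mem_span_of_mem_ideal_span keelRels5_isHomogeneous h
  rw [homogeneousComponent_eq_self (isHomogeneous_X_pow 0 2)] at hspan
  have hzero : keelPairing (X 0 ^ 2) = 0 :=
    (Submodule.span_le (p := LinearMap.ker keelPairing)).2
      (fun _ hr ↦ keelPairing_eq_zero_of_mem_keelRels5 hr) hspan
  rw [sq, keelPairing_X_mul_X] at hzero
  norm_num [keelForm] at hzero

/-- the degree-2 component `A_2` is one-dimensional, spanned by `x_0²`. -/
theorem stmt3 :
    Module.finrank ℚ (keelComp5 2) = 1 ∧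
    keelComp5 2 = Submodule.span ℚ {Ideal.Quotient.mk keelIdeal5 (X 0 ^ 2)} := by
  have hspan : keelComp5 2 = Submodule.span ℚ {Ideal.Quotient.mk keelIdeal5 (X 0 ^ 2)} := by
    refine le_antisymm keelComp5_two_le_span ?_
    rw [Submodule.span_le, Set.singleton_subset_iff]
    exact ⟨X 0 ^ 2, isHomogeneous_X_pow 0 2, rfl⟩
  refine ⟨?_, hspan⟩
  rw [hspan, finrank_span_singleton]
  exact mt Ideal.Quotient.eq_zero_iff_mem.mp X_zero_sq_notMem_keelIdeal5
end

section
/- Let A be the graded commutative Q-algebra on generators x_0,...,x_4 (indices mod 5) with relations x_i x_{i+1} = 0 and (x_i + x_{i+2} - x_{i+1}) x_k = 0 for k ∈ {i, i-1, i+2, i+3}. Then A_3 = 0, i.e., every product of three generators vanishes in A. -/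
/-!
Write `x i` for the generators and `s = x 0 * x 2`. The relations `x i * x (i + 1) = 0` and
`(x (i + 1) + x (i + 3) - x (i + 2)) * x i = 0` give `x i * x (i + 2) = x i * x (i + 3)`, and the
right-hand side is the "diagonal" product `x (i + 3) * x (i + 5)`. So the diagonal products are
invariant under `i ↦ i + 3`, which generates `ℤ/5`, hence all equal `s`; together with
`x i ^ 2 = - x i * x (i + 2)` this shows `A₂ = ℚ s`. Finally `x i * s = x i * x (i + 1) * x (i + 3) = 0`,
so every cubic monomial, and hence `A₃`, vanishes.
-/

open MvPolynomial

structure PentagonRelations {R : Type*} [CommRing R] (a : ZMod 5 → R) : Prop where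
  mul_add_one : ∀ i, a i * a (i + 1) = 0
  mul_self : ∀ i, (a i + a (i + 2) - a (i + 1)) * a i = 0
  mul_sub_one : ∀ i, (a i + a (i + 2) - a (i + 1)) * a (i - 1) = 0

namespace PentagonRelations

variable {R : Type*} [CommRing R] {a : ZMod 5 → R}

theorem mul_add_two_eq_mul_add_three (h : PentagonRelations a) (i : ZMod 5) :
    a i * a (i + 2) = a i * a (i + 3) := by
  have h' := h.mul_sub_one (i + 1)
  rw [add_sub_cancel_right, add_assoc, add_assoc, show (1 + 2 : ZMod 5) = 3 from rfl,
    show (1 + 1 : ZMod 5) = 2 from rfl] at h'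
  linear_combination h.mul_add_one i - h'

theorem mul_add_two_eq (h : PentagonRelations a) (i : ZMod 5) :
    a i * a (i + 2) = a 0 * a 2 := by
  have step (j : ZMod 5) : a (j + 3) * a (j + 3 + 2) = a j * a (j + 2) := by
    rw [show j + 3 + 2 = j by grind, mul_comm, h.mul_add_two_eq_mul_add_three]
  have orbit (n : ℕ) : a (n * 3) * a (n * 3 + 2) = a 0 * a 2 := by
    induction n with
    | zero => simp
    | succ n ih => rw [Nat.cast_succ, add_one_mul, step, ih]
  rw [← orbit (2 * i.val)]
  congr 3 <;> push_cast [ZMod.natCast_zmod_val] <;> grind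

theorem exists_mul_eq_intCast_mul (h : PentagonRelations a) (j k : ZMod 5) :
    ∃ c : ℤ, a j * a k = c * (a 0 * a 2) := by
  obtain ⟨d, rfl⟩ : ∃ d, k = j + d := ⟨k - j, by ring⟩
  obtain rfl | rfl | rfl | rfl | rfl : d = 0 ∨ d = 1 ∨ d = 2 ∨ d = 3 ∨ d = 4 := by
    revert d; decide
  · refine ⟨-1, ?_⟩
    rw [add_zero, Int.cast_neg, Int.cast_one]
    linear_combination h.mul_self j + h.mul_add_one j - h.mul_add_two_eq j
  · exact ⟨0, by simpa using h.mul_add_one j⟩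
  · exact ⟨1, by simpa using h.mul_add_two_eq j⟩
  · exact ⟨1, by simpa [← h.mul_add_two_eq_mul_add_three] using h.mul_add_two_eq j⟩
  · have h4 := h.mul_add_one (j + 4)
    rw [show j + 4 + 1 = j by grind, mul_comm] at h4
    exact ⟨0, by simpa using h4⟩

theorem mul_mul_eq_zero (h : PentagonRelations a) (i j k : ZMod 5) : a i * a j * a k = 0 := by
  obtain ⟨c, hc⟩ := h.exists_mul_eq_intCast_mul j k
  have hs : a i * (a 0 * a 2) = 0 := by
    rw [← h.mul_add_two_eq (i + 1), ← mul_assoc, h.mul_add_one, zero_mul]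
  rw [mul_assoc, hc, mul_left_comm, hs, mul_zero]

end PentagonRelations

theorem MvPolynomial.IsHomogeneous.mem_pow_idealOfVars {σ R : Type*} [CommSemiring R]
    {p : MvPolynomial σ R} {n : ℕ} (hp : p.IsHomogeneous n) : p ∈ idealOfVars σ R ^ n :=
  (mem_pow_idealOfVars_iff n p).2 fun x hx => by
    rw [Finsupp.degree_eq_weight_one]
    exact (hp (mem_support_iff.1 hx)).ge

theorem Ideal.span_range_pow_three_eq_bot {R ι : Type*} [CommRing R] {a : ι → R}
    (h : ∀ i j k, a i * a j * a k = 0) : Ideal.span (Set.range a) ^ 3 = ⊥ := by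
  rw [pow_succ, pow_two, Ideal.span_mul_span', Ideal.span_mul_span', Ideal.span_eq_bot]
  rintro _ ⟨_, ⟨_, ⟨i, rfl⟩, _, ⟨j, rfl⟩, rfl⟩, _, ⟨k, rfl⟩, rfl⟩
  exact h i j k

theorem pentagonRelations_keelIdeal5 :
    PentagonRelations fun i => Ideal.Quotient.mk keelIdeal5 (X i) where
  mul_add_one i := by
    rw [← map_mul, Ideal.Quotient.eq_zero_iff_mem]
    exact Ideal.subset_span (Or.inl ⟨i, rfl⟩)
  mul_self i := by
    rw [← map_add, ← map_sub, ← map_mul, Ideal.Quotient.eq_zero_iff_mem]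
    exact Ideal.subset_span (Or.inr ⟨i, i, Or.inl rfl, rfl⟩)
  mul_sub_one i := by
    rw [← map_add, ← map_sub, ← map_mul, Ideal.Quotient.eq_zero_iff_mem]
    exact Ideal.subset_span (Or.inr ⟨i, i - 1, Or.inr (Or.inl rfl), rfl⟩)

/-- the degree-3 component `A_3` vanishes; equivalently every product of
three generators is zero in `A`. -/
theorem stmt4 :
    keelComp5 3 = ⊥ ∧
    ∀ i j k : ZMod 5, Ideal.Quotient.mk keelIdeal5 (X i * X j * X k) = 0 := by
  have h := pentagonRelations_keelIdeal5
  refine ⟨?_, fun i j k => by simpa only [map_mul] using h.mul_mul_eq_zero i j k⟩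
  have hcube : (idealOfVars (ZMod 5) ℚ ^ 3).map (Ideal.Quotient.mk keelIdeal5) = ⊥ := by
    rw [Ideal.map_pow, Ideal.map_span, ← Set.range_comp]
    exact Ideal.span_range_pow_three_eq_bot h.mul_mul_eq_zero
  rw [eq_bot_iff]
  rintro _ ⟨p, hp, rfl⟩
  rw [Submodule.mem_bot, ← Ideal.mem_bot, ← hcube]
  exact Ideal.mem_map_of_mem _ (IsHomogeneous.mem_pow_idealOfVars hp)
end
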